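/- arXiv:0906.0377 — 2 statements merged into one kernel-verified Lean document; each statement's English description precedes it below -/
import Mathlib

section
/- Let r ∈ [n] and let θ be a word consisting of the n−1 elements of [n]\{r} in some order. Then Σ_{i=1}^{n} q^{maj(θ_i^r)} = (1 + q + q^2 + ... + q^{n−1}) · q^{maj(θ)}, as an identity of polynomials in q. -/
open Polynomial

/-- The word (1, 2, ..., n) as a list of integers. -/
def W (n : ℕ) : List ℤ := (List.range n).map (fun i => (i : ℤ) + 1)

/-- Descent set of a word: 1-based indices i ∈ {1,...,m-1} with w(i) > w(i+1). -/
def descSet (w : List ℤ) : Finset ℕ :=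
  (Finset.Icc 1 (w.length - 1)).filter (fun i => w.getD (i - 1) 0 > w.getD i 0)

/-- Major index of a word: the sum of its descents. -/
def maj (w : List ℤ) : ℕ := ∑ i ∈ descSet w, i

/-- `dstat w k` is the number of descents of `w` that are ≥ k. -/
def dstat (w : List ℤ) (k : ℕ) : ℕ := ((descSet w).filter (fun i => k ≤ i)).card

/-- Major increment: the change in major index when `r` is inserted into `w`
at (1-based) position `k`. -/
def mi (w : List ℤ) (k : ℕ) (r : ℤ) : ℤ := (maj (w.insertIdx (k - 1) r) : ℤ) - (maj w : ℤ)

/-- The q-factorial [m]_q! = ∏_{i=1}^m (1 + q + ... + q^{i-1}), as a polynomial in q. -/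
noncomputable def qFact (m : ℕ) : Polynomial ℚ :=
  ∏ i ∈ Finset.range m, ∑ j ∈ Finset.range (i + 1), (X : Polynomial ℚ) ^ j

/-- The q-binomial coefficient [n choose a]_q = [n]_q!/([a]_q!·[n−a]_q!). -/
noncomputable def qBinom (n a : ℕ) : Polynomial ℚ := qFact n / (qFact a * qFact (n - a))

/-- The set of all shuffles of two words `θ` and `π` (words containing `θ` and `π`
as complementary subwords). -/
def shuffles (θ π : List ℤ) : Finset (List ℤ) :=
  (θ ++ π).permutations.toFinset.filter (fun σ => θ.Sublist σ ∧ π.Sublist σ)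


/-! Induct on `θ` by appending a last letter `x` to a word `w` with last letter `a`. Inserting `r`
strictly inside `w` leaves the comparison of `x` with its left neighbour `a` unchanged, so those
insertions reproduce the inner sum for `w`, shifted by a common power of `q`. The two insertions
next to `x` are computed directly, and for each relative order of `a`, `r`, `x` the recursion closes
by `q · [L+1]_q + 1 = [L+1]_q + q^(L+1)`. -/

namespace List

variable {α : Type*}

theorem insertIdx_append_of_le_length {l₁ : List α} (l₂ : List α) {i : ℕ} (a : α)
    (hi : i ≤ l₁.length) : (l₁ ++ l₂).insertIdx i a = l₁.insertIdx i a ++ l₂ := by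
  induction l₁ generalizing i with
  | nil => simp_all
  | cons b l ih =>
    cases i with
    | zero => rfl
    | succ i => simp [ih (Nat.le_of_succ_le_succ hi)]

theorem getLastD_insertIdx_of_lt {l : List α} {i : ℕ} (a d : α) (hi : i < l.length) :
    (l.insertIdx i a).getLastD d = l.getLastD d := by
  have hl : l ≠ [] := ne_nil_of_length_pos (by omega)
  rw [← dropLast_append_getLast hl, insertIdx_append_of_le_length _ _ (by simp; omega)]
  simp only [getLastD_concat]

end List

open Finset

theorem maj_append_singleton (w : List ℤ) (x : ℤ) :
    maj (w ++ [x]) = maj w + if x < w.getLastD 0 then w.length else 0 := by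
  rcases w.eq_nil_or_concat with rfl | ⟨v, y, rfl⟩
  · simp [maj, descSet]
  rw [List.concat_eq_append]
  have hget : ∀ i ≤ v.length, (v ++ [y] ++ [x]).getD i 0 = (v ++ [y]).getD i 0 := fun i hi => by
    rw [List.getD_eq_getElem?_getD, List.getD_eq_getElem?_getD,
      List.getElem?_append_left (by simp; omega)]
  have hIcc : Icc 1 (v.length + 1) = insert (v.length + 1) (Icc 1 v.length) := by
    simpa using (insert_Icc_right_eq_Icc_succ (a := 1) (b := v.length) (by simp)).symm
  simp only [maj, descSet, List.length_append, List.length_singleton, Nat.add_sub_cancel]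
  rw [List.getLastD_concat, hIcc, filter_insert]
  rw [filter_congr fun i hi => by
    rw [hget i (by simp at hi; omega), hget (i - 1) (by simp at hi; omega)]]
  have hy : (v ++ [y] ++ [x]).getD (v.length + 1 - 1) 0 = y := by simp
  have hx : (v ++ [y] ++ [x]).getD (v.length + 1) 0 = x := by simp
  rw [hy, hx]
  split_ifs with hxy
  · rw [sum_insert (by simp)]
    omega
  · omega

theorem sum_pow_maj_insertIdx {r : ℤ} {θ : List ℤ} (hr : r ∉ θ) :
    ∑ j ∈ range (θ.length + 1), (X : ℚ[X]) ^ maj (θ.insertIdx j r) =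
      (∑ j ∈ range (θ.length + 1), X ^ j) * X ^ maj θ := by
  induction θ using List.reverseRecOn with
  | nil => simp [maj, descSet]
  | append_singleton w x ih =>
    simp only [List.mem_append, List.mem_singleton, not_or] at hr
    obtain ⟨hrw, hrx⟩ := hr
    set L := w.length
    set a := w.getLastD 0
    have hinner : ∀ j ∈ range L, (X : ℚ[X]) ^ maj ((w ++ [x]).insertIdx j r) =
        X ^ maj (w.insertIdx j r) * X ^ (if x < a then L + 1 else 0) := fun j hj => by
      have hj : j < L := mem_range.mp hj
      rw [List.insertIdx_append_of_le_length _ _ hj.le, maj_append_singleton, pow_add,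
        List.getLastD_insertIdx_of_lt _ _ hj, List.length_insertIdx_of_le_length hj.le]
    have hbefore : maj ((w ++ [x]).insertIdx L r) =
        maj w + (if r < a then L else 0) + (if x < r then L + 1 else 0) := by
      rw [List.insertIdx_append_of_le_length _ _ le_rfl, List.insertIdx_length_self,
        maj_append_singleton, maj_append_singleton, List.getLastD_concat, List.length_append,
        List.length_singleton]
    have hafter : maj ((w ++ [x]).insertIdx (L + 1) r) =
        maj w + (if x < a then L else 0) + (if r < x then L + 1 else 0) := by
      rw [show L + 1 = (w ++ [x]).length by simp [L], List.insertIdx_length_self,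
        maj_append_singleton, maj_append_singleton, List.getLastD_concat, List.length_append,
        List.length_singleton]
    have ih := ih hrw
    rw [sum_range_succ, List.insertIdx_length_self, maj_append_singleton] at ih
    have hgeom : X * (∑ j ∈ range (L + 1), (X : ℚ[X]) ^ j) + 1 =
        (∑ j ∈ range (L + 1), X ^ j) + X ^ (L + 1) :=
      geom_sum_succ.symm.trans (sum_range_succ _ _)
    rw [List.length_append, List.length_singleton, sum_range_succ, sum_range_succ,
      sum_congr rfl hinner, ← sum_mul, hbefore, hafter, maj_append_singleton,
      sum_range_succ _ (L + 1), eq_sub_of_add_eq ih]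
    -- one case for each order of `a`, `r`, `x` (`r ≠ x`) that is not contradictory
    split_ifs <;>
      first
        | ring1
        | linear_combination (X : ℚ[X]) ^ (maj w + L) * hgeom
        | (exfalso; omega)

theorem W_eq_map (n : ℕ) : W n = (List.range n).map fun i : ℕ => (i : ℤ) + 1 := by
  simp [W, ← List.flatMap_pure_eq_map, Function.comp_def, List.flatMap_assoc]

theorem nodup_W (n : ℕ) : (W n).Nodup := by
  rw [W_eq_map]
  exact List.nodup_range.map fun i j h => by simpa using h

theorem length_W (n : ℕ) : (W n).length = n := by simp [W_eq_map]

/-- Theorem 1.1, case a = 1: if r ∈ [n] and θ is a word on [n]\{r}, then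
Σ_{i=1}^n q^(maj θᵢʳ) = (1 + q + ... + q^{n-1}) · q^(maj θ). -/
theorem major_index_single_insertion (n : ℕ) (r : ℤ) (hr : r ∈ W n) (θ : List ℤ)
    (hθ : θ.Perm ((W n).erase r)) :
    ∑ i ∈ Finset.Icc 1 n, (X : Polynomial ℚ) ^ (maj (θ.insertIdx (i - 1) r)) =
      (∑ j ∈ Finset.range n, (X : Polynomial ℚ) ^ j) * (X : Polynomial ℚ) ^ (maj θ) := by
  have hrθ : r ∉ θ := fun h => (nodup_W n).not_mem_erase (hθ.mem_iff.mp h)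
  have hn : 0 < n := length_W n ▸ List.length_pos_of_mem hr
  have hlen : θ.length + 1 = n := by
    rw [hθ.length_eq, List.length_erase_of_mem hr, length_W]
    omega
  rw [← hlen, ← sum_pow_maj_insertIdx hrθ, ← Ico_succ_right_eq_Icc, Order.succ_eq_add_one,
    sum_Ico_eq_sum_range]
  simp
end

section
/- Let τ be a word of n−1 distinct integers and let p and q be two distinct integers not appearing in τ. Fix j ∈ {1,...,n} and let τ_j^p be the word of length n formed by inserting p into τ at position j. Then the set of the first j entries of MIS(τ_j^p, q) equals the set {x + χ(q > p) : x is one of the first j entries of MIS(τ, p)}, where χ(q > p) = 1 if q > p and 0 otherwise. That is, the first j entries of MIS(τ_j^p, q) are a permutation of the first j entries of MIS(τ,p), each increased by 1 if q > p and unchanged if q < p. -/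
open Polynomial

/-!
The first `k` entries of `MIS(σ, r)` are the consecutive integers `c, c + 1, …, c + k - 1`,
where `c = miMin σ k r` is the number of descents of `σ` that are `≥ k`, plus one if
`σ(k) < r`. Indeed, passing from `k` to `k + 1` the new increment is either `c + k` (and `c`
stays) or `c - 1` (and `c` drops by one). In `τ_j^p` the `j`-th letter is `p`, and inserting `p`
at position `j` adds `χ(τ(j) < p)` descents `≥ j`; hence the start of the interval for
`(τ_j^p, q)` is the one for `(τ, p)` shifted by `χ(p < q)`.
-/

lemma List.getD_insertIdx {α : Type*} {w : List α} {t : ℕ} (ht : t ≤ w.length) (r : α)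
    (i : ℕ) (d : α) :
    (w.insertIdx t r).getD i d =
      if i < t then w.getD i d else if i = t then r else w.getD (i - 1) d := by
  simp only [List.getD_eq_getElem?_getD, List.getElem?_insertIdx]
  split_ifs <;> simp_all

lemma List.getD_ne_of_notMem {α : Type*} {σ : List α} {r : α} (hr : r ∉ σ) {i : ℕ}
    (hi : i < σ.length) (d : α) : σ.getD i d ≠ r := by
  rw [List.getD_eq_getElem _ _ hi]
  exact fun h => hr (h ▸ List.getElem_mem hi)

lemma Finset.sum_eq_sum_filter_lt_add_sum_filter_gt {α M : Type*} [LinearOrder α]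
    [AddCommMonoid M] (s : Finset α) (t : α) (f : α → M) :
    ∑ i ∈ s, f i =
      ∑ i ∈ s.filter (· < t), f i + ∑ i ∈ s.filter (t < ·), f i + if t ∈ s then f t else 0 := by
  rw [Finset.sum_filter, Finset.sum_filter, ← Finset.sum_ite_eq s t f,
    ← Finset.sum_add_distrib, ← Finset.sum_add_distrib]
  refine Finset.sum_congr rfl fun i _ => ?_
  rcases lt_trichotomy i t with h | rfl | h
  · simp [h, h.not_gt, h.ne']
  · simp
  · simp [h, h.not_gt, h.ne]

-- Descents are 1-based while `getD` is 0-based: `w.getD i 0` is the letter `w(i + 1)`.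
lemma mem_descSet {w : List ℤ} {i : ℕ} :
    i ∈ descSet w ↔ 1 ≤ i ∧ i < w.length ∧ w.getD i 0 < w.getD (i - 1) 0 := by
  simp only [descSet, Finset.mem_filter, Finset.mem_Icc, gt_iff_lt]
  omega

lemma descSet_insertIdx {w : List ℤ} {t : ℕ} (ht : t ≤ w.length) (r : ℤ) :
    descSet (w.insertIdx t r) =
      (descSet w).filter (· < t) ∪ ((descSet w).filter (t < ·)).map (addRightEmbedding 1) ∪
        ({t} : Finset ℕ).filter (fun _ => 1 ≤ t ∧ r < w.getD (t - 1) 0) ∪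
        ({t + 1} : Finset ℕ).filter (fun _ => t < w.length ∧ w.getD t 0 < r) := by
  ext i
  have hshift : (∃ a, (a ∈ descSet w ∧ t < a) ∧ a + 1 = i) ↔ (i - 1 ∈ descSet w ∧ t + 1 < i) :=
    ⟨fun ⟨a, ha, hai⟩ => by subst hai; exact ⟨ha.1, by omega⟩,
      fun ⟨ha, hti⟩ => ⟨i - 1, ⟨ha, by omega⟩, by omega⟩⟩
  simp only [Finset.mem_union, Finset.mem_filter, Finset.mem_map, Finset.mem_singleton,
    addRightEmbedding_apply, hshift]
  simp only [mem_descSet, List.length_insertIdx_of_le_length ht, List.getD_insertIdx ht]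
  rcases lt_trichotomy i t with hit | rfl | hti
  · simp [hit, show i - 1 < t by omega, show i < w.length + 1 ↔ i < w.length by omega,
      show ¬ t + 1 < i by omega, hit.ne, show i ≠ t + 1 by omega]
  · simp only [lt_irrefl, if_false, if_true, and_false, false_and, or_false, true_and,
      false_or, show ¬ i = i + 1 by omega, show ¬ i + 1 < i by omega]
    refine ⟨fun ⟨h1, _, h3⟩ => ⟨h1, ?_⟩, fun ⟨h1, h3⟩ => ⟨h1, by omega, ?_⟩⟩ <;>
      simpa [show i - 1 < i by omega] using h3
  rcases (Nat.succ_le_of_lt hti).eq_or_lt with rfl | hti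
  · simp [show t + 1 < w.length + 1 ↔ t < w.length by omega]
  · simp [show ¬ i < t by omega, show i ≠ t by omega, show ¬ i - 1 < t by omega,
      show i - 1 ≠ t by omega, show i - 1 - 1 = i - 2 by omega, hti, show i ≠ t + 1 by omega]
    omega

lemma sum_descSet_insertIdx {M : Type*} [AddCommMonoid M] {w : List ℤ} {t : ℕ}
    (ht : t ≤ w.length) (r : ℤ) (f : ℕ → M) :
    ∑ i ∈ descSet (w.insertIdx t r), f i =
      ∑ i ∈ (descSet w).filter (· < t), f i + ∑ i ∈ (descSet w).filter (t < ·), f (i + 1) +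
        (if 1 ≤ t ∧ r < w.getD (t - 1) 0 then f t else 0) +
        (if t < w.length ∧ w.getD t 0 < r then f (t + 1) else 0) := by
  rw [descSet_insertIdx ht, Finset.sum_union, Finset.sum_union, Finset.sum_union]
  · simp only [Finset.sum_map, Finset.sum_filter, Finset.sum_singleton, addRightEmbedding_apply]
  all_goals
    simp only [Finset.disjoint_left, Finset.mem_union, Finset.mem_filter, Finset.mem_map,
      Finset.mem_singleton, addRightEmbedding_apply]
    omega

lemma dstat_eq_sum (w : List ℤ) (k : ℕ) :
    dstat w k = ∑ i ∈ descSet w, if k ≤ i then 1 else 0 :=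
  Finset.card_filter _ _

lemma dstat_succ_eq_card (w : List ℤ) (t : ℕ) :
    dstat w (t + 1) = ((descSet w).filter (t < ·)).card := rfl

lemma dstat_eq_dstat_succ_add (w : List ℤ) (t : ℕ) :
    dstat w t = dstat w (t + 1) + if t ∈ descSet w then 1 else 0 := by
  rw [dstat_eq_sum, Finset.sum_eq_sum_filter_lt_add_sum_filter_gt _ t, dstat_succ_eq_card,
    Finset.sum_eq_zero fun i hi => if_neg (Finset.mem_filter.1 hi).2.not_ge,
    Finset.sum_ite_of_true fun i hi => (Finset.mem_filter.1 hi).2.le]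
  simp

lemma dstat_insertIdx_succ {w : List ℤ} {t : ℕ} (ht : t ≤ w.length) (r : ℤ) :
    dstat (w.insertIdx t r) (t + 1) =
      dstat w (t + 1) + if t < w.length ∧ w.getD t 0 < r then 1 else 0 := by
  rw [dstat_eq_sum, sum_descSet_insertIdx ht, dstat_succ_eq_card,
    Finset.sum_eq_zero fun i hi => if_neg (by simp at hi; omega),
    Finset.sum_ite_of_true fun i hi => by simp at hi; omega]
  simp

lemma cast_maj (w : List ℤ) : (maj w : ℤ) = ∑ i ∈ descSet w, (i : ℤ) := by
  simp [maj]

-- Every descent after the insertion point moves one step right, which accounts for `dstat`.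
lemma mi_succ {w : List ℤ} {t : ℕ} (ht : t ≤ w.length) (r : ℤ) :
    mi w (t + 1) r = dstat w (t + 1)
      + (if 1 ≤ t ∧ r < w.getD (t - 1) 0 then (t : ℤ) else 0)
      + (if t < w.length ∧ w.getD t 0 < r then (t : ℤ) + 1 else 0)
      - (if t ∈ descSet w then (t : ℤ) else 0) := by
  rw [mi, Nat.add_sub_cancel, cast_maj, cast_maj, sum_descSet_insertIdx ht,
    Finset.sum_eq_sum_filter_lt_add_sum_filter_gt (descSet w) t, dstat_succ_eq_card,
    Finset.card_eq_sum_ones, Nat.cast_sum]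
  simp only [Nat.cast_add, Nat.cast_one, Finset.sum_add_distrib]
  split_ifs <;> ring

def miMin (σ : List ℤ) (k : ℕ) (r : ℤ) : ℤ :=
  dstat σ k + if k ≤ σ.length ∧ σ.getD (k - 1) 0 < r then 1 else 0

lemma mi_one (σ : List ℤ) (r : ℤ) : mi σ 1 r = miMin σ 1 r := by
  have h0 : 0 ∉ descSet σ := fun h => by simp [mem_descSet] at h
  rw [mi_succ (Nat.zero_le _), miMin]
  simp [h0, Nat.one_le_iff_ne_zero, Nat.pos_iff_ne_zero]

lemma mi_succ_eq_or {σ : List ℤ} (hnd : σ.Nodup) {r : ℤ} (hr : r ∉ σ) {k : ℕ} (hk1 : 1 ≤ k)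
    (hk : k ≤ σ.length) :
    (mi σ (k + 1) r = miMin σ k r + k ∧ miMin σ (k + 1) r = miMin σ k r) ∨
      (mi σ (k + 1) r = miMin σ k r - 1 ∧ miMin σ (k + 1) r = miMin σ k r - 1) := by
  have hprev := List.getD_ne_of_notMem hr (i := k - 1) (by omega) 0
  have hnext : k < σ.length → σ.getD k 0 ≠ r := fun hlt => List.getD_ne_of_notMem hr hlt 0
  have hadj : k < σ.length → σ.getD (k - 1) 0 ≠ σ.getD k 0 := fun hlt h => by
    rw [List.getD_eq_getElem _ _ (by omega), List.getD_eq_getElem _ _ hlt,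
      hnd.getElem_inj_iff] at h
    omega
  have hdesc : k ∈ descSet σ ↔ k < σ.length ∧ σ.getD k 0 < σ.getD (k - 1) 0 := by
    simp [mem_descSet, hk1]
  rw [mi_succ hk, miMin, miMin, dstat_eq_dstat_succ_add σ k, Nat.add_sub_cancel]
  simp only [hdesc]
  split_ifs <;> push_cast <;> omega

theorem image_mi_Icc {σ : List ℤ} (hnd : σ.Nodup) {r : ℤ} (hr : r ∉ σ) {k : ℕ} (hk1 : 1 ≤ k)
    (hk : k ≤ σ.length + 1) :
    (Finset.Icc 1 k).image (mi σ · r) = Finset.Icc (miMin σ k r) (miMin σ k r + k - 1) := by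
  induction k, hk1 using Nat.le_induction with
  | base => simp [mi_one]
  | succ k hk1 ih =>
    rw [← Finset.insert_Icc_right_eq_Icc_add_one (by omega), Finset.image_insert, ih (by omega)]
    rcases mi_succ_eq_or hnd hr hk1 (by omega) with ⟨hmi, hmin⟩ | ⟨hmi, hmin⟩
    all_goals
      ext x
      simp only [Finset.mem_insert, Finset.mem_Icc, hmi, hmin]
      push_cast
      omega

lemma miMin_insertIdx {τ : List ℤ} {t : ℕ} (ht : t ≤ τ.length) (p q : ℤ) :
    miMin (τ.insertIdx t p) (t + 1) q = miMin τ (t + 1) p + if p < q then 1 else 0 := by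
  have hp : (τ.insertIdx t p).getD t 0 = p := by
    rw [List.getD_insertIdx ht]; simp
  rw [miMin, miMin, dstat_insertIdx_succ ht, Nat.add_sub_cancel, hp,
    List.length_insertIdx_of_le_length ht]
  split_ifs <;> push_cast <;> omega

/-- Lemma 4.1: for τ a word of n-1 distinct integers, p ≠ q not appearing in τ, and
j ∈ {1,...,n}, the set of the first j entries of MIS(τⱼᵖ, q) equals the set of the
first j entries of MIS(τ, p), each increased by 1 if q > p (and unchanged if q < p). -/
theorem mis_insertion_lemma (n : ℕ) (τ : List ℤ) (hnd : τ.Nodup)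
    (hlen : τ.length + 1 = n) (p q : ℤ) (hpq : p ≠ q) (hp : p ∉ τ) (hq : q ∉ τ)
    (j : ℕ) (hj1 : 1 ≤ j) (hjn : j ≤ n) :
    (Finset.Icc 1 j).image (fun i => mi (τ.insertIdx (j - 1) p) i q) =
      (Finset.Icc 1 j).image (fun i => mi τ i p + (if p < q then 1 else 0)) := by
  obtain ⟨t, rfl⟩ : ∃ t, j = t + 1 := ⟨j - 1, by omega⟩
  have ht : t ≤ τ.length := by omega
  have hnd' : (τ.insertIdx t p).Nodup :=
    (List.perm_insertIdx p τ ht).nodup_iff.2 (List.nodup_cons.2 ⟨hp, hnd⟩)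
  have hq' : q ∉ τ.insertIdx t p := by
    rw [List.mem_insertIdx ht]
    rintro (h | h)
    exacts [hpq h.symm, hq h]
  have hshift : (fun i => mi τ i p + if p < q then 1 else 0) =
      (· + if p < q then 1 else 0) ∘ (mi τ · p) := rfl
  rw [Nat.add_sub_cancel,
    image_mi_Icc hnd' hq' (by omega) (by rw [List.length_insertIdx_of_le_length ht]; omega),
    hshift, ← Finset.image_image, image_mi_Icc hnd hp (by omega) (by omega),
    Finset.image_add_right_Icc, miMin_insertIdx ht]
  ring_nf
end
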